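/- Let α,β,μ be reals with α,β>0 and Δ = α²+β²−2μ² > 0. Then ∂_β M[B_μ] = 4(Δ² + 2μ²Δ + 4μ²β²)/(Δ² + 8μ²β²), which is strictly positive. -/

import Mathlib

open Real

/-- Mass of the Gardner breather as a function of the parameters `α, β, μ`. -/
noncomputable def breatherMass (α β μ : ℝ) : ℝ :=
  4 * β + 2 * Real.sqrt 2 * μ *
    Real.arctan (2 * Real.sqrt 2 * μ * β / (α ^ 2 + β ^ 2 - 2 * μ ^ 2))

/-! Writing `a = α² - 2μ²` and `c = 2√2 μ`, the mass is `4β + c · arctan (cβ / (a + β²))`, so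
the chain rule gives `4 + c² (a - β²) / ((a + β²)² + c² β²)`; since `c² = 8μ²` this is the stated
quotient, whose numerator and denominator are visibly positive once `Δ = a + β² > 0`. -/

theorem hasDerivAt_arctan_mul_div_add_sq (a c x : ℝ) (hx : a + x ^ 2 ≠ 0) :
    HasDerivAt (fun t => arctan (c * t / (a + t ^ 2)))
      (c * (a - x ^ 2) / ((a + x ^ 2) ^ 2 + c ^ 2 * x ^ 2)) x := by
  have hquot : HasDerivAt (fun t => c * t / (a + t ^ 2))
      ((c * (a + x ^ 2) - c * x * (2 * x)) / (a + x ^ 2) ^ 2) x := by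
    have hnum : HasDerivAt (fun t => c * t) c x := by
      simpa using (hasDerivAt_id x).const_mul c
    have hden : HasDerivAt (fun t => a + t ^ 2) (2 * x) x := by
      simpa using (hasDerivAt_pow 2 x).const_add a
    exact hnum.div hden hx
  refine hquot.arctan.congr_deriv ?_
  field_simp
  ring

theorem breatherMass_eq (α β μ : ℝ) :
    breatherMass α β μ = 4 * β + 2 * √2 * μ *
      arctan (2 * √2 * μ * β / (α ^ 2 - 2 * μ ^ 2 + β ^ 2)) := by
  rw [breatherMass, add_sub_right_comm]

theorem hasDerivAt_breatherMass (α β μ : ℝ) (hΔ : α ^ 2 + β ^ 2 - 2 * μ ^ 2 ≠ 0) :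
    HasDerivAt (fun b => breatherMass α b μ)
      (4 * ((α ^ 2 + β ^ 2 - 2 * μ ^ 2) ^ 2
          + 2 * μ ^ 2 * (α ^ 2 + β ^ 2 - 2 * μ ^ 2) + 4 * μ ^ 2 * β ^ 2) /
        ((α ^ 2 + β ^ 2 - 2 * μ ^ 2) ^ 2 + 8 * μ ^ 2 * β ^ 2)) β := by
  simp only [breatherMass_eq, add_sub_right_comm] at hΔ ⊢
  refine (((hasDerivAt_id β).const_mul 4).add
    ((hasDerivAt_arctan_mul_div_add_sq _ _ β hΔ).const_mul _)).congr_deriv ?_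
  have hc : (2 * √2 * μ) ^ 2 = 8 * μ ^ 2 := by
    rw [mul_pow, mul_pow, sq_sqrt zero_le_two]; ring
  rw [← mul_div_assoc, ← mul_assoc, ← sq, hc]
  generalize α ^ 2 - 2 * μ ^ 2 = a at hΔ ⊢
  have hden : (a + β ^ 2) ^ 2 + 8 * μ ^ 2 * β ^ 2 ≠ 0 := by positivity
  field_simp
  ring

theorem gardner_breather_mass_deriv_beta_general (α β μ : ℝ)
    (hΔ : 0 < α ^ 2 + β ^ 2 - 2 * μ ^ 2) :
    HasDerivAt (fun b => breatherMass α b μ)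
      (4 * ((α ^ 2 + β ^ 2 - 2 * μ ^ 2) ^ 2
          + 2 * μ ^ 2 * (α ^ 2 + β ^ 2 - 2 * μ ^ 2) + 4 * μ ^ 2 * β ^ 2) /
        ((α ^ 2 + β ^ 2 - 2 * μ ^ 2) ^ 2 + 8 * μ ^ 2 * β ^ 2)) β ∧
    0 < 4 * ((α ^ 2 + β ^ 2 - 2 * μ ^ 2) ^ 2
          + 2 * μ ^ 2 * (α ^ 2 + β ^ 2 - 2 * μ ^ 2) + 4 * μ ^ 2 * β ^ 2) /
        ((α ^ 2 + β ^ 2 - 2 * μ ^ 2) ^ 2 + 8 * μ ^ 2 * β ^ 2) :=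
  ⟨hasDerivAt_breatherMass α β μ hΔ.ne', by positivity⟩

theorem gardner_breather_mass_deriv_beta (α β μ : ℝ) (hα : 0 < α) (hβ : 0 < β)
    (hΔ : 0 < α ^ 2 + β ^ 2 - 2 * μ ^ 2) :
    HasDerivAt (fun b => breatherMass α b μ)
      (4 * ((α ^ 2 + β ^ 2 - 2 * μ ^ 2) ^ 2
          + 2 * μ ^ 2 * (α ^ 2 + β ^ 2 - 2 * μ ^ 2) + 4 * μ ^ 2 * β ^ 2) /
        ((α ^ 2 + β ^ 2 - 2 * μ ^ 2) ^ 2 + 8 * μ ^ 2 * β ^ 2)) β ∧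
    0 < 4 * ((α ^ 2 + β ^ 2 - 2 * μ ^ 2) ^ 2
          + 2 * μ ^ 2 * (α ^ 2 + β ^ 2 - 2 * μ ^ 2) + 4 * μ ^ 2 * β ^ 2) /
        ((α ^ 2 + β ^ 2 - 2 * μ ^ 2) ^ 2 + 8 * μ ^ 2 * β ^ 2) :=
  gardner_breather_mass_deriv_beta_general α β μ hΔ
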